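/- Let G be a cubic graph (3-regular finite simple graph). Then the sequence of coefficients (A_{−3}(G), A_{−1}(G), A_1(G), A_3(G)) is unimodal, i.e., there is an index j ∈ {0,1,2,3} such that the sequence is nondecreasing up to position j and nonincreasing from position j on. -/

import Mathlib

open Polynomial Finset

/-- Number of neighbors of `v` inside the set `S` (denoted δ_S(v)). -/
def SimpleGraph.degIn {V : Type*} [Fintype V] [DecidableEq V]
    (G : SimpleGraph V) [DecidableRel G.Adj] (S : Finset V) (v : V) : ℕ :=
  (S.filter (fun u => G.Adj v u)).card

/-- Number of neighbors of `v` outside the set `S` (denoted δ_{S̄}(v)). -/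
def SimpleGraph.degOut {V : Type*} [Fintype V] [DecidableEq V]
    (G : SimpleGraph V) [DecidableRel G.Adj] (S : Finset V) (v : V) : ℕ :=
  (Sᶜ.filter (fun u => G.Adj v u)).card

/-- `S` is an exact defensive `k`-alliance in `G`: the induced subgraph `⟨S⟩` is connected
(in particular `S` is nonempty) and `k = k_S = min_{v ∈ S} (δ_S(v) - δ_{S̄}(v))`. -/
def SimpleGraph.IsExactAlliance {V : Type*} [Fintype V] [DecidableEq V]
    (G : SimpleGraph V) [DecidableRel G.Adj] (S : Finset V) (k : ℤ) : Prop :=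
  (G.induce (S : Set V)).Connected ∧
    (∀ v ∈ S, k ≤ (G.degIn S v : ℤ) - (G.degOut S v : ℤ)) ∧
    (∃ v ∈ S, (G.degIn S v : ℤ) - (G.degOut S v : ℤ) = k)

/-- `A_k(G)`: the number of exact defensive `k`-alliances in `G`. -/
noncomputable def SimpleGraph.allianceCoeff {V : Type*} [Fintype V] [DecidableEq V]
    (G : SimpleGraph V) [DecidableRel G.Adj] (k : ℤ) : ℕ :=
  Set.ncard {S : Finset V | G.IsExactAlliance S k}

/-- The alliance polynomial `A(G;x) = Σ_{k=-Δ}^{Δ} A_k(G) x^{n+k}`, where `n` is the order and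
`Δ` the maximum degree of `G`, regarded as a real polynomial. -/
noncomputable def SimpleGraph.alliancePoly {V : Type*} [Fintype V] [DecidableEq V]
    (G : SimpleGraph V) [DecidableRel G.Adj] : Polynomial ℝ :=
  ∑ k ∈ Finset.Icc (-(G.maxDegree : ℤ)) (G.maxDegree : ℤ),
    (G.allianceCoeff k : ℝ) • X ^ (((Fintype.card V : ℤ) + k).toNat)

/-!
In a `d`-regular graph the margin `δ_S(v) - δ_{S̄}(v)` of a vertex equals `2 δ_S(v) - d`. So the
exact `(-d)`-alliances are precisely the singletons, whence `A_{-3} = n`, and every edge is an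
exact `(2 - d)`-alliance, whence `A_{-1} ≥ |E| = 3n/2 ≥ n`. An exact `d`-alliance is a connected
set closed under adjacency; deleting a vertex that does not disconnect it leaves an exact
`(d - 2)`-alliance from which the set can be recovered, so `A_3 ≤ A_1`. A sequence of length four
that rises at its first step and falls at its last is unimodal.
-/

namespace SimpleGraph

variable {V : Type*} {G : SimpleGraph V}

theorem IsRegularOfDegree.card_le_card_edgeFinset [Fintype V] [DecidableRel G.Adj] {d : ℕ}
    (hreg : G.IsRegularOfDegree d) (hd : 2 ≤ d) :
    Fintype.card V ≤ #G.edgeFinset := by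
  have h := G.sum_degrees_eq_twice_card_edges
  simp only [hreg.degree_eq, sum_const, card_univ, smul_eq_mul] at h
  nlinarith

variable [DecidableEq V]

theorem Connected.exists_connected_induce_erase {S : Finset V}
    (hS : (G.induce (S : Set V)).Connected) (hS₂ : S.Nontrivial) :
    ∃ v ∈ S, (G.induce (S.erase v : Set V)).Connected := by
  have : Nontrivial (S : Set V) := Set.nontrivial_coe_sort.mpr (Finset.nontrivial_coe.mpr hS₂)
  obtain ⟨v, hv⟩ := hS.exists_connected_induce_compl_singleton_of_finite_nontrivial
  let f : (G.induce (S : Set V)).induce {v}ᶜ →g G.induce (S.erase v : Set V) :=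
    { toFun := fun x => ⟨x.1.1, mem_erase.mpr ⟨fun h => x.2 (Subtype.ext h), x.1.2⟩⟩
      map_rel' := id }
  refine ⟨v, v.2, hv.map f fun y => ?_⟩
  obtain ⟨hyv, hyS⟩ := mem_erase.mp y.2
  exact ⟨⟨⟨y, hyS⟩, fun h => hyv (congrArg Subtype.val h)⟩, rfl⟩

variable [Fintype V] [DecidableRel G.Adj]

theorem degIn_add_degOut (S : Finset V) (v : V) : G.degIn S v + G.degOut S v = G.degree v := by
  rw [degIn, degOut, ← card_union_of_disjoint (disjoint_filter_filter disjoint_compl_right),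
    ← filter_union, union_compl, ← card_neighborFinset_eq_degree, neighborFinset_eq_filter]

theorem degIn_singleton_self (v : V) : G.degIn {v} v = 0 := by
  simp [degIn, filter_singleton]

theorem degIn_pair_of_adj {a b : V} (hab : G.Adj a b) : G.degIn {a, b} a = 1 := by
  rw [degIn, card_eq_one]
  refine ⟨b, ext fun x => ?_⟩
  simp only [mem_filter, mem_insert, mem_singleton]
  constructor
  · rintro ⟨rfl | rfl, hx⟩
    · exact absurd hx (G.irrefl)
    · rfl
  · rintro rfl
    exact ⟨Or.inr rfl, hab⟩

theorem degIn_pos_of_adj {S : Finset V} {u v : V} (hu : u ∈ S) (hadj : G.Adj v u) :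
    0 < G.degIn S v :=
  card_pos.mpr ⟨u, mem_filter.mpr ⟨hu, hadj⟩⟩

namespace IsRegularOfDegree

variable {d : ℕ}

theorem degIn_sub_degOut (hreg : G.IsRegularOfDegree d) (S : Finset V) (v : V) :
    (G.degIn S v : ℤ) - G.degOut S v = 2 * G.degIn S v - d := by
  have := G.degIn_add_degOut S v
  rw [hreg.degree_eq] at this
  omega

theorem isExactAlliance_neg_iff (hreg : G.IsRegularOfDegree d) {S : Finset V} :
    G.IsExactAlliance S (-d) ↔ ∃ v, S = {v} := by
  constructor
  · rintro ⟨hconn, -, v, hv, hmin⟩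
    refine ⟨v, eq_singleton_iff_unique_mem.mpr ⟨hv, fun w hw => by_contra fun hwv => ?_⟩⟩
    have : Nontrivial (S : Set V) :=
      ⟨⟨v, hv⟩, ⟨w, hw⟩, fun h => hwv (congrArg Subtype.val h).symm⟩
    obtain ⟨u, hu⟩ := hconn.preconnected.exists_adj_of_nontrivial ⟨v, hv⟩
    have : 0 < G.degIn S v := degIn_pos_of_adj u.2 hu
    rw [hreg.degIn_sub_degOut] at hmin
    omega
  · rintro ⟨v, rfl⟩
    have hmin : (G.degIn {v} v : ℤ) - G.degOut {v} v = -d := by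
      rw [hreg.degIn_sub_degOut, degIn_singleton_self]; simp
    refine ⟨?_, fun w hw => by rw [mem_singleton.mp hw, hmin], v, mem_singleton_self v, hmin⟩
    rw [coe_singleton, induce_singleton_eq_top]
    exact connected_top

theorem allianceCoeff_neg_eq_card (hreg : G.IsRegularOfDegree d) :
    G.allianceCoeff (-d) = Fintype.card V := by
  have : {S : Finset V | G.IsExactAlliance S (-d)} = Set.range ({·}) := by
    ext S
    simp [hreg.isExactAlliance_neg_iff, eq_comm]
  rw [allianceCoeff, this, Set.ncard_range_of_injective singleton_injective,
    Nat.card_eq_fintype_card]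

theorem isExactAlliance_pair (hreg : G.IsRegularOfDegree d) {a b : V} (hab : G.Adj a b) :
    G.IsExactAlliance {a, b} (2 - d) := by
  have hmin : ∀ w ∈ ({a, b} : Finset V),
      (G.degIn {a, b} w : ℤ) - G.degOut {a, b} w = 2 - d := by
    intro w hw
    rw [hreg.degIn_sub_degOut]
    rcases mem_insert.mp hw with rfl | hw
    · rw [degIn_pair_of_adj hab]; ring
    · rw [mem_singleton.mp hw, pair_comm, degIn_pair_of_adj hab.symm]; ring
  have ha : a ∈ ({a, b} : Finset V) := mem_insert_self a {b}
  refine ⟨?_, fun w hw => (hmin w hw).ge, a, ha, hmin a ha⟩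
  rw [coe_pair]
  exact induce_pair_connected_of_adj hab

theorem card_edgeFinset_le_allianceCoeff (hreg : G.IsRegularOfDegree d) :
    #G.edgeFinset ≤ G.allianceCoeff (2 - d) := by
  rw [← Set.ncard_coe_finset]
  refine Set.ncard_le_ncard_of_injOn Sym2.toFinset (fun e he => ?_)
    (fun e _ e' _ h => Sym2.ext fun x => by rw [← Sym2.mem_toFinset, h, Sym2.mem_toFinset])
  induction e with
  | _ a b =>
    rw [Sym2.toFinset_mk_eq]
    exact hreg.isExactAlliance_pair (by simpa using he)

theorem mem_of_adj_of_isExactAlliance (hreg : G.IsRegularOfDegree d) {S : Finset V}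
    (hS : G.IsExactAlliance S d) {v u : V} (hv : v ∈ S) (hadj : G.Adj v u) : u ∈ S := by
  have hout : G.degOut S v = 0 := by
    have := hS.2.1 v hv
    have := G.degIn_add_degOut S v
    rw [hreg.degree_eq] at this
    omega
  by_contra hu
  exact (card_pos.mpr ⟨u, mem_filter.mpr ⟨mem_compl.mpr hu, hadj⟩⟩).ne' hout

theorem exists_adj_mem_erase_of_isExactAlliance (hreg : G.IsRegularOfDegree d) (hd : 1 ≤ d)
    {S : Finset V} (hS : G.IsExactAlliance S d) {v : V} (hv : v ∈ S) :
    ∃ u ∈ S.erase v, G.Adj v u := by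
  obtain ⟨u, hvu⟩ := G.degree_pos_iff_exists_adj v |>.mp (hreg.degree_eq v ▸ hd)
  exact ⟨u, mem_erase.mpr ⟨hvu.ne', hreg.mem_of_adj_of_isExactAlliance hS hv hvu⟩, hvu⟩

theorem degIn_erase_of_isExactAlliance (hreg : G.IsRegularOfDegree d) {S : Finset V}
    (hS : G.IsExactAlliance S d) {v w : V} (hw : w ∈ S) :
    G.degIn (S.erase v) w = if G.Adj w v then d - 1 else d := by
  have hfilter : S.filter (G.Adj w) = G.neighborFinset w := by
    ext u
    simpa using fun hadj => hreg.mem_of_adj_of_isExactAlliance hS hw hadj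
  rw [degIn, filter_erase, hfilter]
  split_ifs with hadj
  · rw [card_erase_of_mem (by simpa using hadj), card_neighborFinset_eq_degree, hreg.degree_eq]
  · rw [erase_eq_of_notMem (by simpa using hadj), card_neighborFinset_eq_degree, hreg.degree_eq]

theorem isExactAlliance_erase (hreg : G.IsRegularOfDegree d) (hd : 1 ≤ d) {S : Finset V}
    (hS : G.IsExactAlliance S d) {v : V} (hv : v ∈ S)
    (hconn : (G.induce (S.erase v : Set V)).Connected) :
    G.IsExactAlliance (S.erase v) (d - 2) := by
  have hmargin : ∀ w ∈ S.erase v, (G.degIn (S.erase v) w : ℤ) - G.degOut (S.erase v) w =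
      if G.Adj w v then (d : ℤ) - 2 else d := by
    intro w hw
    rw [hreg.degIn_sub_degOut, hreg.degIn_erase_of_isExactAlliance hS (mem_of_mem_erase hw)]
    split_ifs <;> omega
  obtain ⟨u, hu, hvu⟩ := hreg.exists_adj_mem_erase_of_isExactAlliance hd hS hv
  refine ⟨hconn, fun w hw => ?_, u, hu, by rw [hmargin u hu, if_pos hvu.symm]⟩
  rw [hmargin w hw]
  split_ifs <;> omega

theorem eq_of_erase_eq_of_isExactAlliance (hreg : G.IsRegularOfDegree d) (hd : 1 ≤ d)
    {S S' : Finset V} (hS : G.IsExactAlliance S d) (hS' : G.IsExactAlliance S' d) {v v' : V}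
    (hv : v ∈ S) (hv' : v' ∈ S') (h : S.erase v = S'.erase v') : S = S' := by
  -- `S'` is closed under adjacency and contains a neighbour of `v`, so `v ∈ S'`.
  obtain ⟨u, hu, hvu⟩ := hreg.exists_adj_mem_erase_of_isExactAlliance hd hS hv
  rw [h] at hu
  have hvS' : v ∈ S' := hreg.mem_of_adj_of_isExactAlliance hS' (mem_of_mem_erase hu) hvu.symm
  obtain rfl : v = v' := by
    by_contra hne
    exact notMem_erase v S (h ▸ mem_erase.mpr ⟨hne, hvS'⟩)
  rw [← insert_erase hv, h, insert_erase hv']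

theorem allianceCoeff_le_allianceCoeff_sub_two (hreg : G.IsRegularOfDegree d) (hd : 1 ≤ d) :
    G.allianceCoeff d ≤ G.allianceCoeff (d - 2) := by
  have herase : ∀ S, G.IsExactAlliance S d →
      ∃ T, G.IsExactAlliance T (d - 2) ∧ ∃ v ∈ S, S.erase v = T := by
    intro S hS
    obtain ⟨v, hv, -⟩ := hS.2.2
    obtain ⟨u, hu, -⟩ := hreg.exists_adj_mem_erase_of_isExactAlliance hd hS hv
    have hS₂ : S.Nontrivial := ⟨u, mem_of_mem_erase hu, v, hv, ne_of_mem_erase hu⟩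
    obtain ⟨w, hw, hconn⟩ := Connected.exists_connected_induce_erase hS.1 hS₂
    exact ⟨_, hreg.isExactAlliance_erase hd hS hw hconn, w, hw, rfl⟩
  choose! f hf hfS using herase
  refine Set.ncard_le_ncard_of_injOn f hf fun S hS S' hS' hSS' => ?_
  obtain ⟨v, hv, hSv⟩ := hfS S hS
  obtain ⟨v', hv', hS'v'⟩ := hfS S' hS'
  exact hreg.eq_of_erase_eq_of_isExactAlliance hd hS hS' hv hv' (by rw [hSv, hS'v', hSS'])

end IsRegularOfDegree

end SimpleGraph

theorem exists_unimodal_fin_four {α : Type*} [LinearOrder α] {w x y z : α} (hwx : w ≤ x)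
    (hzy : z ≤ y) :
    ∃ j : Fin 4,
      (∀ a b : Fin 4, a ≤ b → b ≤ j → ![w, x, y, z] a ≤ ![w, x, y, z] b) ∧
      (∀ a b : Fin 4, j ≤ a → a ≤ b → ![w, x, y, z] b ≤ ![w, x, y, z] a) := by
  obtain hyx | hxy := le_total y x
  · refine ⟨1, fun a b hab hb => ?_, fun a b hab hb => ?_⟩ <;> fin_cases a <;> fin_cases b <;>
      simp_all [Fin.le_def, hzy.trans hyx]
  · refine ⟨2, fun a b hab hb => ?_, fun a b hab hb => ?_⟩ <;> fin_cases a <;> fin_cases b <;>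
      simp_all [Fin.le_def, hwx.trans hxy]

/-- For a cubic graph `G`, the coefficient sequence
`(A_{-3}(G), A_{-1}(G), A_1(G), A_3(G))` is unimodal. -/
theorem alliance_coeffs_cubic_unimodal
    {V : Type*} [Fintype V] [DecidableEq V]
    (G : SimpleGraph V) [DecidableRel G.Adj]
    (hreg : G.IsRegularOfDegree 3) :
    ∃ j : Fin 4,
      (∀ a b : Fin 4, a ≤ b → b ≤ j →
        ![G.allianceCoeff (-3), G.allianceCoeff (-1), G.allianceCoeff 1, G.allianceCoeff 3] a ≤
        ![G.allianceCoeff (-3), G.allianceCoeff (-1), G.allianceCoeff 1, G.allianceCoeff 3] b) ∧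
      (∀ a b : Fin 4, j ≤ a → a ≤ b →
        ![G.allianceCoeff (-3), G.allianceCoeff (-1), G.allianceCoeff 1, G.allianceCoeff 3] b ≤
        ![G.allianceCoeff (-3), G.allianceCoeff (-1), G.allianceCoeff 1, G.allianceCoeff 3] a) := by
  refine exists_unimodal_fin_four ?_ ?_
  · calc G.allianceCoeff (-3) = Fintype.card V := hreg.allianceCoeff_neg_eq_card
      _ ≤ #G.edgeFinset := hreg.card_le_card_edgeFinset (by norm_num)
      _ ≤ G.allianceCoeff (-1) := hreg.card_edgeFinset_le_allianceCoeff
  · exact hreg.allianceCoeff_le_allianceCoeff_sub_two (by norm_num)
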